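/- Let 0 < p < ∞ and let m ∈ ℕ with m ≥ 2. There exists a constant C > 0 depending only on p and m such that for all j, k ∈ ℕ₀: (i) sup_{0 < h ≤ 2^{−k}} ‖Δ^m_h v_{j,0}‖_{L_p(ℝ)} ≤ C · 2^{−j/p}, and (ii) if k > j then sup_{0 < h ≤ 2^{−k}} ‖Δ^m_h v_{j,0}‖_{L_p(ℝ)} ≤ C · 2^{−k/p} · 2^{j−k}. -/

import Mathlib

open MeasureTheory Filter
open scoped ENNReal NNReal

noncomputable section

/-- The univariate hat function `v`. -/
def hatFn (x : ℝ) : ℝ := if 0 ≤ x ∧ x ≤ 1 then 1 - |2 * x - 1| else 0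

/-- Second difference with step `h` in coordinate `i`. -/
def secondDiff {d : ℕ} {K : Type*} [Field K] (i : Fin d) (h : ℝ)
    (f : (Fin d → ℝ) → K) (x : Fin d → ℝ) : K :=
  f (Function.update x i (x i + 2 * h)) - 2 * f (Function.update x i (x i + h)) + f x

/-- Iterated second differences over `e(j) = {i | j i ≠ -1}` with steps `2^{-j i - 1}`. -/
def iterDiff {d : ℕ} {K : Type*} [Field K] (j : Fin d → ℤ)
    (f : (Fin d → ℝ) → K) : (Fin d → ℝ) → K :=
  (Finset.filter (fun i => j i ≠ -1) Finset.univ).toList.foldr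
    (fun i g => secondDiff i ((2:ℝ) ^ (-(j i) - 1)) g) f

/-- The point `x_{j,k}`. -/
def xnode {d : ℕ} (j k : Fin d → ℤ) : Fin d → ℝ :=
  fun i => (2:ℝ) ^ (-(max (j i) 0)) * (k i : ℝ)

/-- Faber–Schauder coefficient `d²_{j,k}(f)`. -/
def faberCoeff {d : ℕ} {K : Type*} [Field K] (j k : Fin d → ℤ)
    (f : (Fin d → ℝ) → K) : K :=
  (-(1:K) / 2) ^ (Finset.filter (fun i => j i ≠ -1) Finset.univ).card *
    iterDiff j f (xnode j k)

/-- Univariate Faber functions on ℝ (translations over ℤ). -/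
def faberR (j k : ℤ) (x : ℝ) : ℝ :=
  if j = -1 then hatFn ((x + 1 + k) / 2) else hatFn ((2:ℝ) ^ j.toNat * x - k)

/-- Tensorized Faber functions on ℝ^d. -/
def faberFnR {d : ℕ} (j k : Fin d → ℤ) (x : Fin d → ℝ) : ℝ :=
  ∏ i, faberR (j i) (k i) (x i)

/-- Univariate Faber functions for the cube `[0,1]`. -/
def faberC (j k : ℤ) (x : ℝ) : ℝ :=
  if j = -1 then (if k = 0 then 1 - x else x) else hatFn ((2:ℝ) ^ j.toNat * x - k)

/-- Tensorized Faber functions for the cube `[0,1]^d`. -/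
def faberFnC {d : ℕ} (j k : Fin d → ℤ) (x : Fin d → ℝ) : ℝ :=
  ∏ i, faberC (j i) (k i) (x i)

/-- Index set `D_j`. -/
def Dj (j : ℤ) : Finset ℤ := if j = -1 then {0, 1} else Finset.Ico 0 (2 ^ j.toNat)

/-- Index set `D_j` in `d` dimensions. -/
def DjSet {d : ℕ} (j : Fin d → ℤ) : Finset (Fin d → ℤ) :=
  Fintype.piFinset fun i => Dj (j i)

/-- Fourier transform on ℝ^d. -/
def ftd {d : ℕ} (f : (Fin d → ℝ) → ℂ) (ξ : Fin d → ℝ) : ℂ :=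
  (((2 * Real.pi) ^ (-(d:ℝ) / 2) : ℝ) : ℂ) *
    ∫ x : Fin d → ℝ, Complex.exp (-Complex.I * ((∑ i, x i * ξ i : ℝ) : ℂ)) * f x

/-- Inverse Fourier transform on ℝ^d. -/
def ftdInv {d : ℕ} (f : (Fin d → ℝ) → ℂ) (ξ : Fin d → ℝ) : ℂ :=
  (((2 * Real.pi) ^ (-(d:ℝ) / 2) : ℝ) : ℂ) *
    ∫ x : Fin d → ℝ, Complex.exp (Complex.I * ((∑ i, x i * ξ i : ℝ) : ℂ)) * f x

/-- Univariate Fourier transform. -/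
def ft1 (f : ℝ → ℂ) (ξ : ℝ) : ℂ :=
  (((2 * Real.pi) ^ (-(1:ℝ) / 2) : ℝ) : ℂ) *
    ∫ x : ℝ, Complex.exp (-Complex.I * ((x * ξ : ℝ) : ℂ)) * f x

/-- A dyadic decomposition of unity on ℝ. -/
structure IsDyadicDecomposition (φ : ℕ → ℝ → ℝ) : Prop where
  smooth : ∀ n, ContDiff ℝ (⊤ : ℕ∞) (φ n)
  compSupp : ∀ n, HasCompactSupport (φ n)
  supp0 : Function.support (φ 0) ⊆ {x : ℝ | |x| ≤ 2}
  suppn : ∀ n : ℕ, 1 ≤ n →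
    Function.support (φ n) ⊆ {x : ℝ | (2:ℝ) ^ (n - 1) ≤ |x| ∧ |x| ≤ (2:ℝ) ^ (n + 1)}
  deriv_bound : ∀ l : ℕ, ∃ c : ℝ, ∀ (n : ℕ) (x : ℝ),
    (2:ℝ) ^ (n * l) * |iteratedDeriv l (φ n) x| ≤ c
  sum_one : ∀ x : ℝ, ∑' n, φ n x = 1

/-- Extension of `φ` by zero to negative integer indices. -/
def phiZ (φ : ℕ → ℝ → ℝ) (n : ℤ) : ℝ → ℝ := if 0 ≤ n then φ n.toNat else 0

/-- The building block `f_ℓ`. -/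
def fblock {d : ℕ} (φ : ℕ → ℝ → ℝ) (f : (Fin d → ℝ) → ℂ) (l : Fin d → ℤ) :
    (Fin d → ℝ) → ℂ :=
  ftdInv fun ξ => (∏ i, ((phiZ φ (l i) (ξ i) : ℝ) : ℂ)) * ftd f ξ

/-- The Besov norm `B_φ^{1/p}`. -/
def BnormE {d : ℕ} (φ : ℕ → ℝ → ℝ) (p : ℝ) (f : (Fin d → ℝ) → ℂ) : ℝ≥0∞ :=
  ∑' j : Fin d → ℕ, ENNReal.ofReal ((2:ℝ) ^ ((∑ i, (j i : ℝ)) / p)) *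
    eLpNorm (fblock φ f fun i => (j i : ℤ)) (ENNReal.ofReal p) volume

/-- The Triebel–Lizorkin norm `T_φ`. -/
def TnormE {d : ℕ} (φ : ℕ → ℝ → ℝ) (f : (Fin d → ℝ) → ℂ) : ℝ≥0∞ :=
  ∫⁻ x, ⨆ j : Fin d → ℕ,
    ENNReal.ofReal ((2:ℝ) ^ (∑ i, j i) * ‖fblock φ f (fun i => (j i : ℤ)) x‖)

/-- The Smolyak truncation `I_n f` of the Faber–Schauder series on the cube. -/
def smolyakC {d : ℕ} (n : ℕ) (f : (Fin d → ℝ) → ℂ) (x : Fin d → ℝ) : ℂ :=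
  ∑ j ∈ (Fintype.piFinset fun _ : Fin d => Finset.Icc (-1:ℤ) (n:ℤ)).filter
      (fun j => (∑ i, max (j i) 0) ≤ (n:ℤ)),
    ∑ k ∈ DjSet j, faberCoeff j k f * (faberFnC j k x : ℂ)

/-- The unit cube `[0,1]^d`. -/
def unitCube (d : ℕ) : Set (Fin d → ℝ) := Set.Icc 0 1

/-- The dyadic box of level `j` and position `k`. -/
def boxSet {d : ℕ} (j : Fin d → ℕ) (k : Fin d → ℤ) : Set (Fin d → ℝ) :=
  Set.univ.pi fun i =>
    Set.Icc ((2:ℝ) ^ (-(j i : ℤ)) * (k i : ℝ)) ((2:ℝ) ^ (-(j i : ℤ)) * ((k i : ℝ) + 1))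

/-- `m`-th forward difference (ℂ-valued). -/
def fdiffC (m : ℕ) (h : ℝ) (f : ℝ → ℂ) (x : ℝ) : ℂ :=
  ∑ i ∈ Finset.range (m + 1), (-1 : ℂ) ^ (m - i) * (m.choose i : ℂ) * f (x + i * h)

/-- `m`-th forward difference (ℝ-valued). -/
def fdiffR (m : ℕ) (h : ℝ) (g : ℝ → ℝ) (x : ℝ) : ℝ :=
  ∑ i ∈ Finset.range (m + 1), (-1 : ℝ) ^ (m - i) * (m.choose i : ℝ) * g (x + i * h)

/-- The hat function at level `j`: `v_{j,0}`. -/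
def hatj (j : ℕ) (x : ℝ) : ℝ := hatFn ((2:ℝ) ^ j * x)

/-- sup of `L_p` norms of `m`-th differences with step `0 < h ≤ 2^{-k}`. -/
def modk (p : ℝ) (m : ℕ) (k : ℕ) (g : ℝ → ℝ) : ℝ≥0∞ :=
  ⨆ h ∈ Set.Ioc (0:ℝ) ((2:ℝ) ^ (-(k:ℤ))),
    eLpNorm (fdiffR m h g) (ENNReal.ofReal p) volume

/-- The Besov quasinorm `N(g)` built from `L_p` moduli of smoothness. -/
def NBesov (p : ℝ) (q : ℝ≥0∞) (m : ℕ) (g : ℝ → ℝ) : ℝ≥0∞ :=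
  eLpNorm g (ENNReal.ofReal p) volume +
    (if q = ⊤ then ⨆ k : ℕ, ENNReal.ofReal ((2:ℝ) ^ ((k:ℝ) / p)) * modk p m k g
     else (∑' k : ℕ,
        (ENNReal.ofReal ((2:ℝ) ^ ((k:ℝ) / p)) * modk p m k g) ^ q.toReal) ^ (1 / q.toReal))

/-!
Since `v_{j,0} = v (2^j ·)`, we have `Δ^m_h v_{j,0} = (Δ^m_H v) (2^j ·)` with `H = 2^j h`, so
`‖Δ^m_h v_{j,0}‖_p = 2^{-j/p} ‖Δ^m_H v‖_p`. For every `H`, `|Δ^m_H v| ≤ 2^m` and `Δ^m_H v` is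
supported in `m + 1` translates of `[0, 1]`, which gives (i). For `m ≥ 2`, `v` is affine between its
kinks `0, 1/2, 1`, so `Δ^m_H v` vanishes outside the three intervals `[t - mH, t]`, while `v` being
`2`-Lipschitz gives `|Δ^m_H v| ≤ 2^m H`; with `H ≤ 2^{j-k}` this gives (ii).
-/

lemma fdiffR_eq_iterate_fwdDiff (n : ℕ) (h : ℝ) (g : ℝ → ℝ) : fdiffR n h g = (fwdDiff h)^[n] g := by
  funext x
  rw [fwdDiff_iter_eq_sum_shift]
  refine Finset.sum_congr rfl fun i _ => ?_
  rw [zsmul_eq_mul, nsmul_eq_mul]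
  push_cast
  ring

section ForwardDifferences

variable {g : ℝ → ℝ} {h : ℝ}

lemma iterate_fwdDiff_comp_mul_left (a : ℝ) (n : ℕ) :
    (fwdDiff h)^[n] (fun x => g (a * x)) = fun x => (fwdDiff (a * h))^[n] g (a * x) := by
  induction n with
  | zero => rfl
  | succ n ih =>
    simp only [Function.iterate_succ_apply', ih]
    funext x
    simp only [fwdDiff, mul_add]

lemma exists_ne_zero_of_iterate_fwdDiff_ne_zero {n : ℕ} {x : ℝ} (hx : (fwdDiff h)^[n] g x ≠ 0) :
    ∃ i ≤ n, g (x + i * h) ≠ 0 := by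
  rw [fwdDiff_iter_eq_sum_shift] at hx
  obtain ⟨i, hi, hne⟩ := Finset.exists_ne_zero_of_sum_ne_zero hx
  refine ⟨i, Finset.mem_range_succ_iff.mp hi, fun hzero => hne ?_⟩
  rw [nsmul_eq_mul, hzero, smul_zero]

lemma abs_iterate_fwdDiff_le {A : ℝ} (hA : ∀ y, |g y| ≤ A) (n : ℕ) (x : ℝ) :
    |(fwdDiff h)^[n] g x| ≤ 2 ^ n * A := by
  induction n generalizing x with
  | zero => simpa using hA x
  | succ n ih =>
    rw [Function.iterate_succ_apply']
    calc |(fwdDiff h)^[n] g (x + h) - (fwdDiff h)^[n] g x|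
        ≤ |(fwdDiff h)^[n] g (x + h)| + |(fwdDiff h)^[n] g x| := abs_sub _ _
      _ ≤ 2 ^ n * A + 2 ^ n * A := add_le_add (ih _) (ih _)
      _ = 2 ^ (n + 1) * A := by ring

lemma abs_iterate_fwdDiff_succ_le_of_lipschitzWith {K : ℝ≥0} (hg : LipschitzWith K g)
    (hh : 0 ≤ h) (n : ℕ) (x : ℝ) : |(fwdDiff h)^[n + 1] g x| ≤ 2 ^ n * (K * h) := by
  rw [Function.iterate_succ_apply]
  refine abs_iterate_fwdDiff_le (fun y => ?_) n x
  simpa [fwdDiff, ← Real.dist_eq, abs_of_nonneg hh] using hg.dist_le_mul (y + h) y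

lemma exists_kink_of_iterate_fwdDiff_ne_zero {T : Set ℝ}
    (hT : ∀ y, (fwdDiff h)^[2] g y ≠ 0 → ∃ t ∈ T, t ∈ Set.Icc y (y + 2 * h)) (hh : 0 ≤ h) {n : ℕ}
    {x : ℝ} (hx : (fwdDiff h)^[n + 2] g x ≠ 0) : ∃ t ∈ T, x ∈ Set.Icc (t - (n + 2) * h) t := by
  rw [Function.iterate_add_apply] at hx
  obtain ⟨i, hin, hi⟩ := exists_ne_zero_of_iterate_fwdDiff_ne_zero hx
  obtain ⟨t, ht, hyt, hty⟩ := hT _ hi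
  have hin' : (i : ℝ) * h ≤ n * h := by gcongr
  exact ⟨t, ht, by linarith, by nlinarith [Nat.cast_nonneg (α := ℝ) i]⟩

lemma Continuous.iterate_fwdDiff (hg : Continuous g) (n : ℕ) :
    Continuous ((fwdDiff h)^[n] g) := by
  induction n with
  | zero => exact hg
  | succ n ih =>
    rw [Function.iterate_succ_apply']
    exact (ih.comp (continuous_add_const h)).sub ih

end ForwardDifferences

section LpBounds

lemma eLpNorm_le_of_support_subset_of_abs_le {α : Type*} [MeasurableSpace α] {μ : Measure α}
    {p : ℝ≥0∞} {g : α → ℝ} {s : Set α} {A : ℝ} (hs : Function.support g ⊆ s)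
    (hA : ∀ x, |g x| ≤ A) : eLpNorm g p μ ≤ μ s ^ p.toReal⁻¹ * ENNReal.ofReal A := by
  rw [← eLpNorm_restrict_eq_of_support_subset hs]
  simpa using eLpNorm_le_of_ae_bound (μ := μ.restrict s) (p := p) (ae_of_all _ hA)

lemma eLpNorm_comp_mul_left {g : ℝ → ℝ} (hg : Measurable g) {a : ℝ} (ha : 0 < a) (p : ℝ≥0∞) :
    eLpNorm (fun x => g (a * x)) p volume
      = ENNReal.ofReal a⁻¹ ^ p.toReal⁻¹ * eLpNorm g p volume := by
  have hmap := eLpNorm_map_measure (μ := volume) (p := p) hg.aestronglyMeasurable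
    (measurable_const_mul a).aemeasurable
  rw [Real.map_volume_mul_left ha.ne', abs_of_pos (inv_pos.mpr ha),
    eLpNorm_smul_measure_of_ne_zero (by simpa using ha), one_div, ENNReal.toReal_inv] at hmap
  exact hmap.symm

lemma volume_biUnion_Icc_le {ι : Type*} (s : Finset ι) (a : ι → ℝ) (L : ℝ) :
    volume (⋃ i ∈ s, Set.Icc (a i) (a i + L)) ≤ s.card * ENNReal.ofReal L := by
  calc volume (⋃ i ∈ s, Set.Icc (a i) (a i + L))
      ≤ ∑ i ∈ s, volume (Set.Icc (a i) (a i + L)) := measure_biUnion_finset_le _ _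
    _ = s.card * ENNReal.ofReal L := by simp [Real.volume_Icc]

end LpBounds

section HatFunction

lemma hatFn_eq_max (t : ℝ) : hatFn t = max (1 - |2 * t - 1|) 0 := by
  unfold hatFn
  split_ifs with ht <;> rcases abs_cases (2 * t - 1) with ⟨e, _⟩ | ⟨e, _⟩ <;>
    simp only [e, max_def] <;> split_ifs <;> grind

lemma continuous_hatFn : Continuous hatFn := by
  simp only [funext hatFn_eq_max]
  fun_prop

lemma abs_hatFn_le_one (t : ℝ) : |hatFn t| ≤ 1 := by
  rw [hatFn_eq_max, abs_of_nonneg (le_max_right _ _)]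
  exact max_le (by linarith [abs_nonneg (2 * t - 1)]) zero_le_one

lemma lipschitzWith_hatFn : LipschitzWith 2 hatFn := by
  refine LipschitzWith.of_dist_le_mul fun a b => ?_
  simp only [Real.dist_eq, hatFn_eq_max, NNReal.coe_ofNat]
  calc |max (1 - |2 * a - 1|) 0 - max (1 - |2 * b - 1|) 0|
      ≤ |(1 - |2 * a - 1|) - (1 - |2 * b - 1|)| := abs_max_sub_max_le_abs _ _ _
    _ = |(|2 * b - 1|) - (|2 * a - 1|)| := by ring_nf
    _ ≤ |(2 * b - 1) - (2 * a - 1)| := abs_abs_sub_abs_le_abs_sub _ _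
    _ = 2 * |a - b| := by rw [← abs_two, ← abs_mul, abs_sub_comm]; ring_nf

lemma support_hatFn_subset : Function.support hatFn ⊆ Set.Icc 0 1 := fun t ht => by
  by_contra hout
  exact ht (if_neg hout)

lemma iterate_fwdDiff_two_eq_zero_of_affine {g : ℝ → ℝ} {h y c d : ℝ} (hh : 0 ≤ h)
    (hg : ∀ t ∈ Set.Icc y (y + 2 * h), g t = c * t + d) : (fwdDiff h)^[2] g y = 0 := by
  show g (y + h + h) - g (y + h) - (g (y + h) - g y) = 0
  rw [hg y ⟨le_rfl, by linarith⟩, hg (y + h) ⟨by linarith, by linarith⟩,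
    hg (y + h + h) ⟨by linarith, by linarith⟩]
  ring

lemma exists_kink_of_iterate_fwdDiff_two_hatFn_ne_zero {h : ℝ} (hh : 0 ≤ h) {y : ℝ}
    (hy : (fwdDiff h)^[2] hatFn y ≠ 0) :
    ∃ t ∈ ({0, 1 / 2, 1} : Set ℝ), t ∈ Set.Icc y (y + 2 * h) := by
  by_contra! hno
  simp only [Set.mem_insert_iff, Set.mem_singleton_iff, forall_eq_or_imp, forall_eq,
    Set.mem_Icc, not_and, not_le] at hno
  obtain ⟨h0, hhalf, h1⟩ := hno
  apply hy
  have piece : ∀ c d : ℝ, (∀ t, y ≤ t → t ≤ y + 2 * h → hatFn t = c * t + d) →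
      (fwdDiff h)^[2] hatFn y = 0 := fun c d hcd =>
    iterate_fwdDiff_two_eq_zero_of_affine hh fun t ht => hcd t ht.1 ht.2
  rcases lt_or_ge (y + 2 * h) 0 with hA | hA
  · exact piece 0 0 fun t _ _ => by rw [hatFn_eq_max]; grind
  rcases lt_or_ge (y + 2 * h) (1 / 2) with hB | hB
  · exact piece 2 0 fun t _ _ => by rw [hatFn_eq_max]; grind
  rcases lt_or_ge (y + 2 * h) 1 with hC | hC
  · exact piece (-2) 2 fun t _ _ => by rw [hatFn_eq_max]; grind
  · exact piece 0 0 fun t _ _ => by rw [hatFn_eq_max]; grind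

end HatFunction

section HatFunctionDifferences

variable {p : ℝ≥0∞}

lemma eLpNorm_iterate_fwdDiff_hatFn_le (H : ℝ) (n : ℕ) :
    eLpNorm ((fwdDiff H)^[n] hatFn) p volume
      ≤ ENNReal.ofReal (n + 1) ^ p.toReal⁻¹ * ENNReal.ofReal (2 ^ n) := by
  have hsupp : Function.support ((fwdDiff H)^[n] hatFn)
      ⊆ ⋃ i ∈ Finset.range (n + 1), Set.Icc (-(i * H)) (-(i * H) + 1) := fun x hx => by
    obtain ⟨i, hin, hi⟩ := exists_ne_zero_of_iterate_fwdDiff_ne_zero hx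
    obtain ⟨h0, h1⟩ := support_hatFn_subset hi
    exact Set.mem_biUnion (Finset.mem_range_succ_iff.mpr hin) ⟨by linarith, by linarith⟩
  have hvol : volume (⋃ i ∈ Finset.range (n + 1), Set.Icc (-(i * H)) (-(i * H) + 1))
      ≤ ENNReal.ofReal (n + 1) := by
    refine (volume_biUnion_Icc_le _ _ _).trans_eq ?_
    rw [Finset.card_range, ENNReal.ofReal_one, mul_one, ← ENNReal.ofReal_natCast]
    push_cast
    rfl
  refine (eLpNorm_le_of_support_subset_of_abs_le hsupp
    (abs_iterate_fwdDiff_le (by simpa using abs_hatFn_le_one) n)).trans ?_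
  rw [mul_one]
  gcongr

lemma eLpNorm_iterate_fwdDiff_hatFn_le_of_nonneg {H : ℝ} (hH : 0 ≤ H) (n : ℕ) :
    eLpNorm ((fwdDiff H)^[n + 2] hatFn) p volume
      ≤ ENNReal.ofReal (3 * ((n + 2) * H)) ^ p.toReal⁻¹ * ENNReal.ofReal (2 ^ (n + 2) * H) := by
  have hsupp : Function.support ((fwdDiff H)^[n + 2] hatFn)
      ⊆ ⋃ t ∈ ({0, 1 / 2, 1} : Finset ℝ),
          Set.Icc (t - (n + 2) * H) (t - (n + 2) * H + (n + 2) * H) := fun x hx => by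
    obtain ⟨t, ht, hxt⟩ := exists_kink_of_iterate_fwdDiff_ne_zero
      (fun y => exists_kink_of_iterate_fwdDiff_two_hatFn_ne_zero hH) hH hx
    exact Set.mem_biUnion (by simpa using ht) (by rwa [sub_add_cancel])
  have hvol : volume (⋃ t ∈ ({0, 1 / 2, 1} : Finset ℝ),
      Set.Icc (t - (n + 2) * H) (t - (n + 2) * H + (n + 2) * H))
      ≤ ENNReal.ofReal (3 * ((n + 2) * H)) := by
    refine (volume_biUnion_Icc_le _ _ _).trans ?_
    rw [ENNReal.ofReal_mul zero_le_three, ENNReal.ofReal_ofNat]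
    gcongr
    exact_mod_cast Finset.card_le_three
  have hbound : ∀ x, |(fwdDiff H)^[n + 2] hatFn x| ≤ 2 ^ (n + 2) * H := fun x => by
    have := abs_iterate_fwdDiff_succ_le_of_lipschitzWith lipschitzWith_hatFn hH (n + 1) x
    rwa [NNReal.coe_ofNat, ← mul_assoc, ← pow_succ] at this
  refine (eLpNorm_le_of_support_subset_of_abs_le hsupp hbound).trans ?_
  gcongr

end HatFunctionDifferences

section DilatedHat

lemma fdiffR_hatj (m j : ℕ) (h : ℝ) :
    fdiffR m h (hatj j) = fun x => (fwdDiff (2 ^ j * h))^[m] hatFn (2 ^ j * x) := by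
  rw [fdiffR_eq_iterate_fwdDiff]
  exact iterate_fwdDiff_comp_mul_left _ _

lemma eLpNorm_fdiffR_hatj (p : ℝ≥0∞) (m j : ℕ) (h : ℝ) :
    eLpNorm (fdiffR m h (hatj j)) p volume = ENNReal.ofReal ((2 ^ j)⁻¹) ^ p.toReal⁻¹ *
      eLpNorm ((fwdDiff (2 ^ j * h))^[m] hatFn) p volume := by
  rw [fdiffR_hatj]
  exact eLpNorm_comp_mul_left (continuous_hatFn.iterate_fwdDiff _).measurable (by positivity) p

variable {p : ℝ}

lemma ofReal_rpow_toReal_ofReal_inv (hp : 0 < p) {x : ℝ} (hx : 0 ≤ x) :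
    ENNReal.ofReal x ^ (ENNReal.ofReal p).toReal⁻¹ = ENNReal.ofReal (x ^ p⁻¹) := by
  rw [ENNReal.toReal_ofReal hp.le, ENNReal.ofReal_rpow_of_nonneg hx (inv_nonneg.mpr hp.le)]

lemma inv_two_pow_rpow_inv (j : ℕ) (p : ℝ) : ((2 : ℝ) ^ j)⁻¹ ^ p⁻¹ = 2 ^ (-(j : ℝ) / p) := by
  rw [← Real.rpow_natCast, ← Real.rpow_neg zero_le_two, ← Real.rpow_mul zero_le_two, div_eq_mul_inv]

lemma modk_hatj_le (hp : 0 < p) (m j k : ℕ) :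
    modk p m k (hatj j) ≤ ENNReal.ofReal (2 ^ m * (m + 1) ^ p⁻¹ * 2 ^ (-(j : ℝ) / p)) := by
  refine iSup₂_le fun h _ => ?_
  calc eLpNorm (fdiffR m h (hatj j)) (ENNReal.ofReal p) volume
      ≤ ENNReal.ofReal ((2 ^ j)⁻¹) ^ (ENNReal.ofReal p).toReal⁻¹ *
          (ENNReal.ofReal (m + 1) ^ (ENNReal.ofReal p).toReal⁻¹ * ENNReal.ofReal (2 ^ m)) := by
        rw [eLpNorm_fdiffR_hatj]
        gcongr
        exact eLpNorm_iterate_fwdDiff_hatFn_le _ _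
    _ = ENNReal.ofReal (2 ^ m * (m + 1) ^ p⁻¹ * 2 ^ (-(j : ℝ) / p)) := by
        rw [ofReal_rpow_toReal_ofReal_inv hp (by positivity),
          ofReal_rpow_toReal_ofReal_inv hp (by positivity), inv_two_pow_rpow_inv,
          ← ENNReal.ofReal_mul (by positivity), ← ENNReal.ofReal_mul (by positivity)]
        ring_nf

lemma modk_hatj_le_of_two_le (hp : 0 < p) {m : ℕ} (hm : 2 ≤ m) (j k : ℕ) :
    modk p m k (hatj j) ≤ ENNReal.ofReal
      (2 ^ m * (3 * m) ^ p⁻¹ * 2 ^ (-(k : ℝ) / p) * 2 ^ ((j : ℝ) - k)) := by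
  obtain ⟨n, rfl⟩ : ∃ n, m = n + 2 := ⟨m - 2, by omega⟩
  refine iSup₂_le fun h hh => ?_
  set H := (2 : ℝ) ^ j * h
  have hH0 : 0 ≤ H := by have := hh.1; positivity
  have hHk : H ≤ 2 ^ ((j : ℝ) - k) := by
    have hhk := hh.2
    rw [zpow_neg, zpow_natCast] at hhk
    rw [Real.rpow_sub two_pos, Real.rpow_natCast, Real.rpow_natCast, div_eq_mul_inv]
    exact mul_le_mul_of_nonneg_left hhk (by positivity)
  calc eLpNorm (fdiffR (n + 2) h (hatj j)) (ENNReal.ofReal p) volume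
      ≤ ENNReal.ofReal ((2 ^ j)⁻¹) ^ (ENNReal.ofReal p).toReal⁻¹ *
          (ENNReal.ofReal (3 * ((n + 2) * H)) ^ (ENNReal.ofReal p).toReal⁻¹ *
            ENNReal.ofReal (2 ^ (n + 2) * H)) := by
        rw [eLpNorm_fdiffR_hatj]
        gcongr
        exact eLpNorm_iterate_fwdDiff_hatFn_le_of_nonneg hH0 _
    _ = ENNReal.ofReal (2 ^ (-(j : ℝ) / p) * ((3 * ((n + 2) * H)) ^ p⁻¹ * (2 ^ (n + 2) * H))) := by
        rw [ofReal_rpow_toReal_ofReal_inv hp (by positivity),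
          ofReal_rpow_toReal_ofReal_inv hp (by positivity), inv_two_pow_rpow_inv,
          ← ENNReal.ofReal_mul (by positivity), ← ENNReal.ofReal_mul (by positivity)]
    _ ≤ ENNReal.ofReal (2 ^ (-(j : ℝ) / p) *
          ((3 * ((n + 2) * 2 ^ ((j : ℝ) - k))) ^ p⁻¹ * (2 ^ (n + 2) * 2 ^ ((j : ℝ) - k)))) := by
        gcongr
    _ = ENNReal.ofReal (2 ^ (n + 2) * (3 * ↑(n + 2)) ^ p⁻¹ * 2 ^ (-(k : ℝ) / p) *
          2 ^ ((j : ℝ) - k)) := by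
        congr 1
        have hsplit :
            (2 : ℝ) ^ (-(k : ℝ) / p) = 2 ^ (-(j : ℝ) / p) * (2 ^ ((j : ℝ) - k)) ^ p⁻¹ := by
          rw [← Real.rpow_mul zero_le_two, ← Real.rpow_add two_pos]
          ring_nf
        rw [hsplit, ← mul_assoc 3, Real.mul_rpow (by positivity) (by positivity)]
        push_cast
        ring

end DilatedHat

/-- moduli-of-smoothness estimates for the hat functions `v_{j,0}`. -/
theorem statement18 (p : ℝ) (hp : 0 < p) (m : ℕ) (hm : 2 ≤ m) :
    ∃ C : ℝ, 0 < C ∧ ∀ j k : ℕ,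
      (modk p m k (hatj j) ≤ ENNReal.ofReal (C * (2:ℝ) ^ (-(j:ℝ) / p))) ∧
      (j < k → modk p m k (hatj j) ≤
        ENNReal.ofReal (C * (2:ℝ) ^ (-(k:ℝ) / p) * (2:ℝ) ^ ((j:ℝ) - (k:ℝ)))) := by
  have hm1 : (1 : ℝ) ≤ m := by exact_mod_cast (by omega : 1 ≤ m)
  refine ⟨2 ^ m * (3 * m) ^ p⁻¹, by positivity, fun j k => ⟨?_, fun _ => ?_⟩⟩
  · refine (modk_hatj_le hp m j k).trans (ENNReal.ofReal_le_ofReal ?_)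
    have : ((m : ℝ) + 1) ^ p⁻¹ ≤ (3 * m) ^ p⁻¹ :=
      Real.rpow_le_rpow (by positivity) (by linarith) (inv_nonneg.mpr hp.le)
    gcongr
  · exact modk_hatj_le_of_two_le hp hm j k
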